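/- For all positive real parameters α, β, ξ and all stresses m ∈ ℝ², τ ∈ ℝ^{2×2}, the complementary strain-energy density W* is Fréchet differentiable at (m, τ) (as a function on ℝ² × ℝ^{2×2}), and its derivative is the linear map (a, b) ↦ χ₁·a₁ + χ₂·a₂ + γ₁₁·b₁₁ + γ₁₂·b₁₂ + γ₂₁·b₂₁ + γ₂₂·b₂₂, where (χ, γ) = S(m, τ); that is, the strains are the gradients of W*. -/

import Mathlib

noncomputable section

/-- The quadratic form `Q(χ, γ)` on strains. -/
def Qform (α β ξ : ℝ) (χ : Fin 2 → ℝ) (γ : Fin 2 → Fin 2 → ℝ) : ℝ :=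
  β ^ 2 * (α ^ 2 * ((χ 0) ^ 2 + (χ 1) ^ 2) +
    ξ ^ 2 * ((γ 0 0) ^ 2 + (γ 0 1) ^ 2 + (γ 1 0) ^ 2 + (γ 1 1) ^ 2))

/-- The quadratic form `Q*(m, τ)` on stresses. -/
def Qstar (α β ξ : ℝ) (m : Fin 2 → ℝ) (τ : Fin 2 → Fin 2 → ℝ) : ℝ :=
  β ^ 2 * (((m 0) ^ 2 + (m 1) ^ 2) / α ^ 2 +
    ((τ 0 0) ^ 2 + (τ 0 1) ^ 2 + (τ 1 0) ^ 2 + (τ 1 1) ^ 2) / ξ ^ 2)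

/-- The strain-limiting constitutive map `S` sending stresses to strains. -/
def Smap (α β ξ : ℝ) (m : Fin 2 → ℝ) (τ : Fin 2 → Fin 2 → ℝ) :
    (Fin 2 → ℝ) × (Fin 2 → Fin 2 → ℝ) :=
  (fun i => m i / (α ^ 2 * (1 + Real.sqrt (Qstar α β ξ m τ))),
   fun i j => τ i j / (ξ ^ 2 * (1 + Real.sqrt (Qstar α β ξ m τ))))

/-- The inverse constitutive map `T` sending strains to stresses. -/
def Tmap (α β ξ : ℝ) (χ : Fin 2 → ℝ) (γ : Fin 2 → Fin 2 → ℝ) :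
    (Fin 2 → ℝ) × (Fin 2 → Fin 2 → ℝ) :=
  (fun i => α ^ 2 * χ i / (1 - Real.sqrt (Qform α β ξ χ γ)),
   fun i j => ξ ^ 2 * γ i j / (1 - Real.sqrt (Qform α β ξ χ γ)))

/-- The strain-energy density `W(χ, γ)`. -/
def Wdens (α β ξ : ℝ) (χ : Fin 2 → ℝ) (γ : Fin 2 → Fin 2 → ℝ) : ℝ :=
  -(1 / β ^ 2) * (Real.sqrt (Qform α β ξ χ γ) +
    Real.log (1 - Real.sqrt (Qform α β ξ χ γ)))

/-- The complementary strain-energy density `W*(m, τ)`. -/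
def Wstar (α β ξ : ℝ) (m : Fin 2 → ℝ) (τ : Fin 2 → Fin 2 → ℝ) : ℝ :=
  (1 / β ^ 2) * (Real.sqrt (Qstar α β ξ m τ) -
    Real.log (1 + Real.sqrt (Qstar α β ξ m τ)))

/-!
Write `W* = β⁻² · φ ∘ Q*` with `φ s = √s - log (1 + √s)`. For `s > 0` one has
`φ' s = 1 / (2 (1 + √s))`, and the chain rule against the gradient of the quadratic form `Q*`
produces exactly the strains `S(m, τ)`. Where `Q*(m, τ) = 0` the stress is a minimum of `Q*`,
so `Q*` has derivative `0` there, and `0 ≤ φ s ≤ s` passes this on to `W*`.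
-/

open Real Asymptotics

lemma abs_sqrt_sub_log_one_add_sqrt_le {s : ℝ} (hs : 0 ≤ s) :
    |√s - log (1 + √s)| ≤ s := by
  set t := √s
  have ht : 0 ≤ t := sqrt_nonneg s
  have hpos : 0 < 1 + t := by linarith
  have hupper : log (1 + t) ≤ t := by linarith [log_le_sub_one_of_pos hpos]
  have hlower : t - t ^ 2 ≤ log (1 + t) := by
    have hinv : 1 - (1 + t)⁻¹ = t / (1 + t) := by field_simp; ring
    have hdiv : t - t ^ 2 ≤ t / (1 + t) := by
      rw [le_div_iff₀ hpos]
      nlinarith [pow_nonneg ht 3]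
    linarith [one_sub_inv_le_log_of_pos hpos]
  rw [abs_of_nonneg (by linarith), ← sq_sqrt hs]
  linarith

lemma hasDerivAt_sqrt_sub_log_one_add_sqrt {s : ℝ} (hs : 0 < s) :
    HasDerivAt (fun s => √s - log (1 + √s)) (1 / (2 * (1 + √s))) s := by
  have hsqrt := hasDerivAt_sqrt hs.ne'
  have hr : 0 < √s := sqrt_pos.mpr hs
  refine (hsqrt.sub ((hsqrt.const_add 1).log (by positivity))).congr_deriv ?_
  field_simp
  ring

theorem HasFDerivAt.zero_of_norm_sub_le {𝕜 E F G : Type*} [NontriviallyNormedField 𝕜]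
    [NormedAddCommGroup E] [NormedSpace 𝕜 E] [NormedAddCommGroup F] [NormedSpace 𝕜 F]
    [NormedAddCommGroup G] [NormedSpace 𝕜 G] {f : E → F} {g : E → G} {x : E} (C : ℝ)
    (hg : HasFDerivAt g (0 : E →L[𝕜] G) x) (hfg : ∀ y, ‖f y - f x‖ ≤ C * ‖g y - g x‖) :
    HasFDerivAt f (0 : E →L[𝕜] F) x := by
  have hg' := hg.isLittleO
  simp only [zero_apply, sub_zero] at hg'
  refine HasFDerivAt.of_isLittleO ?_
  simp only [zero_apply, sub_zero]
  exact (IsBigO.of_bound C (.of_forall hfg)).trans_isLittleO hg'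

lemma Qstar_nonneg (α β ξ : ℝ) (m : Fin 2 → ℝ) (τ : Fin 2 → Fin 2 → ℝ) :
    0 ≤ Qstar α β ξ m τ := by
  unfold Qstar
  positivity

lemma hasFDerivAt_Qstar (α β ξ : ℝ) (m : Fin 2 → ℝ) (τ : Fin 2 → Fin 2 → ℝ) :
    ∃ D : ((Fin 2 → ℝ) × (Fin 2 → Fin 2 → ℝ)) →L[ℝ] ℝ,
      HasFDerivAt (fun p : (Fin 2 → ℝ) × (Fin 2 → Fin 2 → ℝ) => Qstar α β ξ p.1 p.2) D (m, τ) ∧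
      ∀ (a : Fin 2 → ℝ) (b : Fin 2 → Fin 2 → ℝ),
        D (a, b) = β ^ 2 * ((2 * m 0 * a 0 + 2 * m 1 * a 1) / α ^ 2 +
          (2 * τ 0 0 * b 0 0 + 2 * τ 0 1 * b 0 1 + 2 * τ 1 0 * b 1 0 + 2 * τ 1 1 * b 1 1) / ξ ^ 2) := by
  have h1 (i : Fin 2) :=
    (hasFDerivAt_apply i m).comp (m, τ) (hasFDerivAt_fst (𝕜 := ℝ) (p := (m, τ)))
  have h2 (i j : Fin 2) := (hasFDerivAt_apply j (τ i)).comp (m, τ)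
    ((hasFDerivAt_apply i τ).comp (m, τ) (hasFDerivAt_snd (𝕜 := ℝ) (p := (m, τ))))
  have hQ := (((((h1 0).pow 2).add ((h1 1).pow 2)).mul_const (α ^ 2)⁻¹).add
    ((((((h2 0 0).pow 2).add ((h2 0 1).pow 2)).add ((h2 1 0).pow 2)).add
      ((h2 1 1).pow 2)).mul_const (ξ ^ 2)⁻¹)).const_mul (β ^ 2)
  refine ⟨_, hQ.congr_of_eventuallyEq (.of_forall fun p => ?_), fun a b => ?_⟩
  · simp [Qstar, div_eq_mul_inv]
  · simp only [Fin.isValue, Function.comp_apply, Nat.add_one_sub_one, pow_one, nsmul_eq_mul,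
      Nat.cast_ofNat, smul_add, add_apply, smul_apply, ContinuousLinearMap.comp_apply,
      ContinuousLinearMap.coe_fst', ContinuousLinearMap.proj_apply, smul_eq_mul,
      ContinuousLinearMap.coe_snd']
    ring

section

variable {α β ξ : ℝ} {m : Fin 2 → ℝ} {τ : Fin 2 → Fin 2 → ℝ}
  {D : ((Fin 2 → ℝ) × (Fin 2 → Fin 2 → ℝ)) →L[ℝ] ℝ}

lemma hasFDerivAt_Wstar_of_Qstar_pos (hq : 0 < Qstar α β ξ m τ)
    (hD : HasFDerivAt (fun p : (Fin 2 → ℝ) × (Fin 2 → Fin 2 → ℝ) => Qstar α β ξ p.1 p.2) D (m, τ)) :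
    HasFDerivAt (fun p : (Fin 2 → ℝ) × (Fin 2 → Fin 2 → ℝ) => Wstar α β ξ p.1 p.2)
      ((1 / β ^ 2 * (1 / (2 * (1 + √(Qstar α β ξ m τ))))) • D) (m, τ) :=
  (((hasDerivAt_sqrt_sub_log_one_add_sqrt hq).const_mul (1 / β ^ 2)).comp_hasFDerivAt (m, τ) hD :)

lemma hasFDerivAt_Wstar_of_Qstar_eq_zero (hq : Qstar α β ξ m τ = 0)
    (hD : HasFDerivAt (fun p : (Fin 2 → ℝ) × (Fin 2 → Fin 2 → ℝ) => Qstar α β ξ p.1 p.2) D (m, τ)) :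
    HasFDerivAt (fun p : (Fin 2 → ℝ) × (Fin 2 → Fin 2 → ℝ) => Wstar α β ξ p.1 p.2)
      ((1 / β ^ 2 * (1 / (2 * (1 + √(Qstar α β ξ m τ))))) • D) (m, τ) := by
  have hmin : IsLocalMin (fun p : (Fin 2 → ℝ) × (Fin 2 → Fin 2 → ℝ) => Qstar α β ξ p.1 p.2)
      (m, τ) :=
    .of_forall fun p => hq.trans_le (Qstar_nonneg α β ξ p.1 p.2)
  obtain rfl := hmin.hasFDerivAt_eq_zero hD
  rw [smul_zero]
  refine hD.zero_of_norm_sub_le (1 / β ^ 2) fun p => ?_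
  have hp := abs_sqrt_sub_log_one_add_sqrt_le (Qstar_nonneg α β ξ p.1 p.2)
  simp only [Wstar, hq, sqrt_zero, add_zero, log_one, sub_zero, mul_zero, norm_eq_abs,
    abs_mul, abs_of_nonneg (Qstar_nonneg α β ξ p.1 p.2),
    abs_of_nonneg (by positivity : (0 : ℝ) ≤ 1 / β ^ 2)]
  gcongr

end

theorem hasFDerivAt_Wstar_general (α β ξ : ℝ) (hβ : 0 < β)
    (m : Fin 2 → ℝ) (τ : Fin 2 → Fin 2 → ℝ) :
    ∃ L : ((Fin 2 → ℝ) × (Fin 2 → Fin 2 → ℝ)) →L[ℝ] ℝ,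
      HasFDerivAt
        (fun p : (Fin 2 → ℝ) × (Fin 2 → Fin 2 → ℝ) => Wstar α β ξ p.1 p.2) L (m, τ) ∧
      ∀ (a : Fin 2 → ℝ) (b : Fin 2 → Fin 2 → ℝ),
        L (a, b) =
          (Smap α β ξ m τ).1 0 * a 0 + (Smap α β ξ m τ).1 1 * a 1 +
          (Smap α β ξ m τ).2 0 0 * b 0 0 + (Smap α β ξ m τ).2 0 1 * b 0 1 +
          (Smap α β ξ m τ).2 1 0 * b 1 0 + (Smap α β ξ m τ).2 1 1 * b 1 1 := by
  obtain ⟨D, hD, hD_apply⟩ := hasFDerivAt_Qstar α β ξ m τ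
  refine ⟨(1 / β ^ 2 * (1 / (2 * (1 + √(Qstar α β ξ m τ))))) • D, ?_, fun a b => ?_⟩
  · rcases (Qstar_nonneg α β ξ m τ).eq_or_lt with hq | hq
    · exact hasFDerivAt_Wstar_of_Qstar_eq_zero hq.symm hD
    · exact hasFDerivAt_Wstar_of_Qstar_pos hq hD
  · have hβ' : (β ^ 2)⁻¹ * β ^ 2 = 1 := inv_mul_cancel₀ (by positivity)
    rw [smul_apply, hD_apply, smul_eq_mul]
    simp only [Smap]
    generalize 1 + √(Qstar α β ξ m τ) = r
    linear_combination (1 / (2 * r)) *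
      ((2 * m 0 * a 0 + 2 * m 1 * a 1) / α ^ 2 +
        (2 * τ 0 0 * b 0 0 + 2 * τ 0 1 * b 0 1 + 2 * τ 1 0 * b 1 0 + 2 * τ 1 1 * b 1 1) / ξ ^ 2) * hβ'

/-- the complementary strain-energy density `W*` is Fréchet
differentiable at every `(m, τ)`, and its derivative is the linear map
`(a, b) ↦ Σᵢ χᵢ·aᵢ + Σᵢⱼ γᵢⱼ·bᵢⱼ` where `(χ, γ) = S(m, τ)`. -/
theorem hasFDerivAt_Wstar (α β ξ : ℝ) (hα : 0 < α) (hβ : 0 < β) (hξ : 0 < ξ)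
    (m : Fin 2 → ℝ) (τ : Fin 2 → Fin 2 → ℝ) :
    ∃ L : ((Fin 2 → ℝ) × (Fin 2 → Fin 2 → ℝ)) →L[ℝ] ℝ,
      HasFDerivAt
        (fun p : (Fin 2 → ℝ) × (Fin 2 → Fin 2 → ℝ) => Wstar α β ξ p.1 p.2) L (m, τ) ∧
      ∀ (a : Fin 2 → ℝ) (b : Fin 2 → Fin 2 → ℝ),
        L (a, b) =
          (Smap α β ξ m τ).1 0 * a 0 + (Smap α β ξ m τ).1 1 * a 1 +
          (Smap α β ξ m τ).2 0 0 * b 0 0 + (Smap α β ξ m τ).2 0 1 * b 0 1 +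
          (Smap α β ξ m τ).2 1 0 * b 1 0 + (Smap α β ξ m τ).2 1 1 * b 1 1 :=
  hasFDerivAt_Wstar_general α β ξ hβ m τ
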